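/- arXiv:2205.06750 — 3 statements merged into one kernel-verified Lean document; each statement's English description precedes it below -/
import Mathlib

section
/- Let S be a type of states and A a type of actions, let S_s ⊆ S be the set of safe states, let φ be a predicate on S × A (the safety function), let A_φ(s) = {a | φ(s,a)} and S_φ = {s | ∃ a, φ(s,a)}, and let T ⊆ S × A × S be a transition relation. Assume φ is sound, i.e., whenever φ(s,a) holds and (s,a,s') ∈ T, then s' ∈ S_s and there exists a' with φ(s',a'), and assume S_φ ⊆ S_s. Then for every initial state s₀ ∈ S_φ and every horizon p ∈ ℕ there exists a function ψ : S → A with φ(s, ψ(s)) for every s ∈ S_φ, such that every trajectory s₀, s₁, …, s_p satisfying (s_k, ψ(s_k), s_{k+1}) ∈ T for all k < p remains safe: s_k ∈ S_s for all 0 ≤ k ≤ p. -/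
/-! Soundness makes the provably safe states `S_φ` invariant under every transition that takes
a provably safe action, so a policy choosing such actions on `S_φ` keeps a trajectory started
in `S_φ` inside `S_φ ⊆ S_s` for as long as it follows the policy. -/

theorem exists_phi_traj_of_sound {S A : Type*} {φ : S → A → Prop} {T : S → A → S → Prop}
    (hsound : ∀ s a s', φ s a → T s a s' → ∃ a', φ s' a')
    {ψ : S → A} (hψ : ∀ s, (∃ a, φ s a) → φ s (ψ s))
    {traj : ℕ → S} {p : ℕ} (h0 : ∃ a, φ (traj 0) a)
    (hT : ∀ k, k < p → T (traj k) (ψ (traj k)) (traj (k + 1))) :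
    ∀ k, k ≤ p → ∃ a, φ (traj k) a := by
  intro k hk
  induction k with
  | zero => exact h0
  | succ k ih =>
    have hk' : k < p := hk
    exact hsound _ _ _ (hψ _ (ih hk'.le)) (hT k hk')

/-- **Proposition 1.** If the safety function `φ` is sound and every provably safe state
is safe, then from any provably safe initial state `s₀` and for any horizon `p` there is a
replacement function `ψ` choosing provably safe actions on provably safe states, such that
every trajectory following `ψ` stays in the safe set up to time `p`. -/
theorem provably_safe_action_sequence_exists
    {S A : Type*} (Ss : Set S) (φ : S → A → Prop) (T : S → A → S → Prop)
    (hsound : ∀ s a s', φ s a → T s a s' → s' ∈ Ss ∧ ∃ a', φ s' a')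
    (hsub : ∀ s, (∃ a, φ s a) → s ∈ Ss)
    (s₀ : S) (hs₀ : ∃ a, φ s₀ a) (p : ℕ) :
    ∃ ψ : S → A,
      (∀ s, (∃ a, φ s a) → φ s (ψ s)) ∧
      ∀ traj : ℕ → S, traj 0 = s₀ →
        (∀ k, k < p → T (traj k) (ψ (traj k)) (traj (k + 1))) →
        ∀ k, k ≤ p → traj k ∈ Ss := by
  have : Nonempty A := hs₀.nonempty
  have hψ : ∀ s, (∃ a, φ s a) → φ s (Classical.epsilon (φ s)) := fun _ => Classical.epsilon_spec
  refine ⟨fun s => Classical.epsilon (φ s), hψ, fun traj h0 hT k hk => hsub _ ?_⟩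
  exact exists_phi_traj_of_sound (fun s a s' h t => (hsound s a s' h t).2) hψ (h0 ▸ hs₀) hT k hk
end

section
/- Let S be a type of states and A a type of actions, let S_s ⊆ S be the set of safe states, let φ be a predicate on S × A (the safety function), let A_φ(s) = {a | φ(s,a)}, let S_φ = {s | ∃ a, φ(s,a)}, and let T ⊆ S × A × S be a transition relation. Assume φ is sound, i.e., whenever φ(s,a) holds and (s,a,s') ∈ T, then s' ∈ S_s and there exists a' with φ(s',a'), and assume S_φ ⊆ S_s. Let ψ : S → A be a replacement function satisfying ψ(s) ∈ A_φ(s) for every s ∈ S_φ, and define the shielded action a^φ(s, a) = a if φ(s, a) holds and a^φ(s, a) = ψ(s) otherwise. Then for every initial state s₀ ∈ S_φ, every sequence of (arbitrary, possibly unsafe) proposed actions a₀, …, a_{p−1}, and every trajectory with (s_k, a^φ(s_k, a_k), s_{k+1}) ∈ T for all 0 ≤ k < p, one has s_k ∈ S_φ and s_k ∈ S_s for all 0 ≤ k ≤ p. -/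
open scoped Classical

noncomputable def shieldedAction {S A : Type*} (φ : S → A → Prop) (ψ : S → A)
    (s : S) (a : A) : A :=
  if φ s a then a else ψ s

theorem shieldedAction_verified {S A : Type*} {φ : S → A → Prop} {ψ : S → A} {s : S}
    (hψ : φ s (ψ s)) (a : A) : φ s (shieldedAction φ ψ s a) := by
  unfold shieldedAction
  split_ifs with ha
  · exact ha
  · exact hψ

theorem Nat.forall_le_of_succ {P : ℕ → Prop} {p : ℕ} (h₀ : P 0)
    (hsucc : ∀ k < p, P k → P (k + 1)) : ∀ k ≤ p, P k := by
  intro k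
  induction k with
  | zero => exact fun _ => h₀
  | succ k ih => exact fun hk => hsucc k hk (ih (Nat.le_of_succ_le hk))

/-- **Safety of action replacement.** If `φ` is sound, every provably safe state is safe,
and the replacement function `ψ` returns a provably safe action on every provably safe state,
then any trajectory starting in a provably safe state and executing the shielded actions
(for an arbitrary sequence of proposed actions) stays provably safe and safe. -/
theorem action_replacement_is_safe
    {S A : Type*} (Ss : Set S) (φ : S → A → Prop) (T : S → A → S → Prop)
    (hsound : ∀ s a s', φ s a → T s a s' → s' ∈ Ss ∧ ∃ a', φ s' a')
    (hsub : ∀ s, (∃ a, φ s a) → s ∈ Ss)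
    (ψ : S → A) (hψ : ∀ s, (∃ a, φ s a) → φ s (ψ s))
    (p : ℕ) (s : ℕ → S) (a : ℕ → A)
    (hs₀ : ∃ a₀, φ (s 0) a₀)
    (hstep : ∀ k, k < p → T (s k) (shieldedAction φ ψ (s k) (a k)) (s (k + 1))) :
    ∀ k, k ≤ p → (∃ a', φ (s k) a') ∧ s k ∈ Ss := by
  have hprovable : ∀ k ≤ p, ∃ a', φ (s k) a' :=
    Nat.forall_le_of_succ hs₀ fun k hk hsk =>
      (hsound _ _ _ (shieldedAction_verified (hψ _ hsk) (a k)) (hstep k hk)).2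
  exact fun k hk => ⟨hprovable k hk, hsub _ (hprovable k hk)⟩
end

section
/- Let S be a countable type of states, A a countable type of actions, S_s ⊆ S the set of safe states, φ a predicate on S × A with A_φ(s) = {a | φ(s,a)} and S_φ = {s | ∃ a, φ(s,a)}. Let T : S → A → S → ℝ≥0∞ be a transition kernel and assume probabilistic soundness of φ: whenever φ(s,a) holds and T s a s' > 0, then s' ∈ S_s and s' ∈ S_φ. Let π_r : S → A → ℝ≥0∞ be a replacement policy supported on the safe actions, i.e., π_r s a > 0 implies a ∈ A_φ(s). Define the modified transition function T_φ s a s' = T s a s' if φ(s,a) holds, and T_φ s a s' = ∑'_{ã} π_r s ã * T s ã s' otherwise. Then for every s ∈ S_φ, every action a ∈ A, and every s' with T_φ s a s' > 0, one has s' ∈ S_s and s' ∈ S_φ. -/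
open scoped Classical

/-- The transition kernel of the replacement-modified MDP: execute the agent's action if it
is verified safe, otherwise sample a replacement action from `π_r` and execute it. -/
noncomputable def replacedKernel {S A : Type*} (φ : S → A → Prop)
    (T : S → A → S → ENNReal) (πr : S → A → ENNReal) (s : S) (a : A) (s' : S) : ENNReal :=
  if φ s a then T s a s' else ∑' b, πr s b * T s b s'

theorem exists_verified_action_of_replacedKernel_pos {S A : Type*} {φ : S → A → Prop}
    {T : S → A → S → ENNReal} {πr : S → A → ENNReal} (hπr : ∀ s a, 0 < πr s a → φ s a)
    {s : S} {a : A} {s' : S} (hpos : 0 < replacedKernel φ T πr s a s') :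
    ∃ b, φ s b ∧ 0 < T s b s' := by
  unfold replacedKernel at hpos
  split_ifs at hpos with ha
  · exact ⟨a, ha, hpos⟩
  · obtain ⟨b, hb⟩ := ENNReal.summable.tsum_ne_zero_iff.mp hpos.ne'
    obtain ⟨hπ, hT⟩ := CanonicallyOrderedAdd.mul_pos.mp (pos_iff_ne_zero.mpr hb)
    exact ⟨b, hπr s b hπ, hT⟩

theorem replaced_mdp_one_step_safe_general
    {S A : Type*}
    (Ss : Set S) (φ : S → A → Prop) (T : S → A → S → ENNReal)
    (hsound : ∀ s a s', φ s a → 0 < T s a s' → s' ∈ Ss ∧ ∃ a', φ s' a')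
    (πr : S → A → ENNReal) (hπr : ∀ s a, 0 < πr s a → φ s a) :
    ∀ s, (∃ a₀, φ s a₀) → ∀ a s', 0 < replacedKernel φ T πr s a s' →
      s' ∈ Ss ∧ ∃ a', φ s' a' := by
  intro s _ a s' hpos
  obtain ⟨b, hb, hT⟩ := exists_verified_action_of_replacedKernel_pos hπr hpos
  exact hsound s b s' hb hT

/-- **One-step safety of the replacement-modified MDP.** If `φ` is probabilistically sound
and the replacement policy `π_r` is supported on provably safe actions, then from any
provably safe state, every next state reachable with positive probability under the
modified kernel is safe and provably safe, regardless of the agent's action. -/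
theorem replaced_mdp_one_step_safe
    {S A : Type*} [Countable S] [Countable A]
    (Ss : Set S) (φ : S → A → Prop) (T : S → A → S → ENNReal)
    (hsound : ∀ s a s', φ s a → 0 < T s a s' → s' ∈ Ss ∧ ∃ a', φ s' a')
    (πr : S → A → ENNReal) (hπr : ∀ s a, 0 < πr s a → φ s a) :
    ∀ s, (∃ a₀, φ s a₀) → ∀ a s', 0 < replacedKernel φ T πr s a s' →
      s' ∈ Ss ∧ ∃ a', φ s' a' :=
  replaced_mdp_one_step_safe_general Ss φ T hsound πr hπr
end
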